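/- arXiv:1709.03280 — 3 statements merged into one kernel-verified Lean document; each statement's English description precedes it below -/
import Mathlib

section
/- If A is an N×N Hermitian matrix, 3-PMP, with all entries of modulus 0 or 1, then there exist a diagonal matrix D with unimodular diagonal entries and a permutation matrix Q such that (QD)^{-1} A (QD) is block-diagonal with each diagonal block either an all-ones square matrix or an all-zeros square matrix. -/
/-!
The `1 × 1` minors put the diagonal in `{0, 1}`, and the `2 × 2` minors force
`A i i = A j j = 1` whenever `A i j ≠ 0`. For distinct `i, j, k` with `A i j`, `A j k` unimodular
and unit diagonal, the `3 × 3` principal minor equals `-|A i k - A i j * A j k|²`, so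
`A i j * A j k = A i k`. Hence `i = j ∨ A i j ≠ 0` is an equivalence relation. On a class with
representative `ρ` and `A ρ ρ = 1` this gives `A p q = conj (A ρ p) * A ρ q`, so conjugating by
the phases `conj (A ρ p)` turns the block into all ones; a class with `A ρ ρ = 0` is a single
zero entry. Sorting the indices by their representative makes the blocks contiguous.
-/

open Matrix
open scoped ComplexOrder

/-- A Hermitian matrix is `k`-PMP if all its principal minors of size at most `k`
are non-negative. -/
def kPMP {N : ℕ} (k : ℕ) (A : Matrix (Fin N) (Fin N) ℂ) : Prop :=
  ∀ S : Finset (Fin N), S.card ≤ k →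
    0 ≤ (A.submatrix (fun i : S => (i : Fin N)) (fun i : S => (i : Fin N))).det

lemma Matrix.conj_permMatrix_mul_diagonal_apply {n K : Type*} [Fintype n] [DecidableEq n]
    [Field K] (σ : Equiv.Perm n) (A : Matrix n n K) {d : n → K} (hd : ∀ i, d i ≠ 0)
    (i j : n) :
    ((σ.permMatrix K * diagonal d)⁻¹ * A * (σ.permMatrix K * diagonal d)) i j
      = (d i)⁻¹ * A (σ.symm i) (σ.symm j) * d j := by
  have hσ : (σ.permMatrix K)⁻¹ = σ⁻¹.permMatrix K :=
    inv_eq_left_inv (by rw [← permMatrix_mul, mul_inv_cancel, permMatrix_one])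
  have hd : (diagonal d)⁻¹ = diagonal d⁻¹ :=
    inv_eq_left_inv (by rw [diagonal_mul_diagonal, ← diagonal_one]; simp [hd])
  have hconj : σ⁻¹.permMatrix K * A * σ.permMatrix K = A.submatrix σ.symm σ.symm := by
    rw [PEquiv.toMatrix_toPEquiv_mul, PEquiv.mul_toMatrix_toPEquiv]; rfl
  rw [Matrix.mul_inv_rev, hσ, hd, show ∀ D' P' P D : Matrix n n K,
    D' * P' * A * (P * D) = D' * (P' * A * P) * D by simp [Matrix.mul_assoc],
    hconj, mul_diagonal, diagonal_mul]
  rfl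

lemma Matrix.IsHermitian.apply_ne_zero {n α : Type*} [AddMonoid α] [StarAddMonoid α]
    {A : Matrix n n α} (hA : A.IsHermitian) {i j : n} (h : A i j ≠ 0) : A j i ≠ 0 :=
  hA.apply j i ▸ star_ne_zero.mpr h

lemma det_fin_three_of_mul_star_eq_one {a : ℂ} (ha : a * star a = 1) (b c : ℂ) :
    !![1, a, c; star a, 1, b; star c, star b, 1].det = -(Complex.normSq (c - a * b) : ℂ) := by
  rw [← Complex.mul_conj, ← Complex.star_def]
  simp only [det_fin_three, of_apply, cons_val', cons_val_zero, cons_val_one, cons_val_two,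
    head_cons, tail_cons, empty_val', cons_val_fin_one, head_fin_const, star_sub, star_mul']
  linear_combination (b * star b - 1) * ha

namespace kPMP

variable {N : ℕ} {A : Matrix (Fin N) (Fin N) ℂ}

lemma mono {k l : ℕ} (hkl : k ≤ l) (h : kPMP l A) : kPMP k A :=
  fun S hS => h S (hS.trans hkl)

lemma det_submatrix_nonneg {k : ℕ} (h : kPMP k A) {ι : Type*} [Fintype ι] [DecidableEq ι]
    (hι : Fintype.card ι ≤ k) {f : ι → Fin N} (hf : f.Injective) :
    0 ≤ (A.submatrix f f).det := by
  classical
  let e : ι ≃ (Finset.univ.image f : Finset (Fin N)) :=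
    (Equiv.ofInjective f hf).trans (Equiv.subtypeEquivRight (by simp))
  have := h (Finset.univ.image f)
    (by rwa [Finset.card_image_of_injective _ hf, Finset.card_univ])
  rwa [← det_submatrix_equiv_self e] at this

end kPMP

noncomputable def repPhase {N : ℕ} (A : Matrix (Fin N) (Fin N) ℂ) (r : Fin N → Fin N)
    (p : Fin N) : ℂ :=
  if A (r p) p = 0 then 1 else star (A (r p) p)

section UnimodularEntries

variable {N : ℕ} {A : Matrix (Fin N) (Fin N) ℂ}
  (h01 : ∀ i j, ‖A i j‖ = 0 ∨ ‖A i j‖ = 1)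

include h01

lemma diag_eq_zero_or_one (h1 : kPMP 1 A) (i : Fin N) : A i i = 0 ∨ A i i = 1 := by
  have hii : 0 ≤ A i i := by
    have := h1.det_submatrix_nonneg Fintype.card_unique.le (f := ![i])
      (Function.injective_of_subsingleton _)
    rwa [det_fin_one] at this
  rw [Complex.eq_coe_norm_of_nonneg hii]
  rcases h01 i i with h | h <;> simp [h]

lemma apply_mul_star_eq_one {i j : Fin N} (h : A i j ≠ 0) : A i j * star (A i j) = 1 := by
  have hnorm : ‖A i j‖ = 1 := (h01 i j).resolve_left (norm_ne_zero_iff.mpr h)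
  rw [Complex.star_def, Complex.mul_conj', hnorm]
  norm_num

lemma diag_eq_one_of_apply_ne_zero (hA : A.IsHermitian) (h2 : kPMP 2 A) {i j : Fin N}
    (h : A i j ≠ 0) : A i i = 1 := by
  have hdiag := diag_eq_zero_or_one h01 (h2.mono one_le_two)
  rcases eq_or_ne i j with rfl | hij
  · exact (hdiag i).resolve_left h
  have hdet := h2.det_submatrix_nonneg (Fintype.card_fin 2).le (f := ![i, j])
    (by simpa [Function.Injective, Fin.forall_fin_two] using ⟨hij, hij.symm⟩)
  rw [det_fin_two] at hdet
  simp only [submatrix_apply, cons_val_zero, cons_val_one, ← hA.apply j i,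
    apply_mul_star_eq_one h01 h] at hdet
  refine (hdiag i).resolve_left fun hi => ?_
  rw [hi, zero_mul, zero_sub] at hdet
  norm_num at hdet

lemma norm_repPhase (r : Fin N → Fin N) (p : Fin N) : ‖repPhase A r p‖ = 1 := by
  unfold repPhase
  split_ifs with h
  · exact norm_one
  · rw [norm_star]
    exact (h01 _ _).resolve_left (norm_ne_zero_iff.mpr h)

lemma apply_mul_apply_eq (hA : A.IsHermitian) (h3 : kPMP 3 A) {i j k : Fin N}
    (hij : A i j ≠ 0) (hjk : A j k ≠ 0) : A i j * A j k = A i k := by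
  have h2 := h3.mono (by norm_num : 2 ≤ 3)
  have hi := diag_eq_one_of_apply_ne_zero h01 hA h2 hij
  have hj := diag_eq_one_of_apply_ne_zero h01 hA h2 hjk
  rcases eq_or_ne i j with rfl | hij'
  · rw [hi, one_mul]
  rcases eq_or_ne j k with rfl | hjk'
  · rw [hj, mul_one]
  rcases eq_or_ne i k with rfl | hik'
  · rw [← hA.apply j i, apply_mul_star_eq_one h01 hij, hi]
  have hk : A k k = 1 := diag_eq_one_of_apply_ne_zero h01 hA h2 (j := j)
    (hA.apply_ne_zero hjk)
  have hsub : A.submatrix ![i, j, k] ![i, j, k]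
      = !![1, A i j, A i k; star (A i j), 1, A j k; star (A i k), star (A j k), 1] := by
    ext a b
    fin_cases a <;> fin_cases b <;> simp [hi, hj, hk, hA.apply]
  have hdet := h3.det_submatrix_nonneg (Fintype.card_fin 3).le (f := ![i, j, k])
    (by simpa [Function.Injective, Fin.forall_fin_succ] using
      ⟨⟨hij', hik'⟩, ⟨hij'.symm, hjk'⟩, hik'.symm, hjk'.symm⟩)
  rw [hsub, det_fin_three_of_mul_star_eq_one (apply_mul_star_eq_one h01 hij),
    ← Complex.ofReal_neg, Complex.zero_le_real, neg_nonneg] at hdet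
  exact (sub_eq_zero.mp <| Complex.normSq_eq_zero.mp <|
    hdet.antisymm (Complex.normSq_nonneg _)).symm

lemma equivalence_eq_or_apply_ne_zero (hA : A.IsHermitian) (h3 : kPMP 3 A) :
    Equivalence fun i j : Fin N => i = j ∨ A i j ≠ 0 where
  refl _ := .inl rfl
  symm := by
    rintro i j (rfl | h)
    exacts [.inl rfl, .inr (hA.apply_ne_zero h)]
  trans := by
    rintro i j k (rfl | hij) (rfl | hjk)
    exacts [.inl rfl, .inr hjk, .inr hij,
      .inr (apply_mul_apply_eq h01 hA h3 hij hjk ▸ mul_ne_zero hij hjk)]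

lemma repPhase_inv_mul_apply_mul_repPhase (hA : A.IsHermitian) (h3 : kPMP 3 A)
    {r : Fin N → Fin N} (hr : ∀ i, r i = i ∨ A (r i) i ≠ 0)
    (hr_eq : ∀ i j, A i j ≠ 0 → r i = r j) (p q : Fin N) :
    (repPhase A r p)⁻¹ * A p q * repPhase A r q = if r p = r q then A (r p) (r p) else 0 := by
  split_ifs with hpq
  case neg => rw [not_imp_comm.mp (hr_eq p q) hpq, mul_zero, zero_mul]
  generalize hρ : r p = ρ at hpq ⊢
  have hrp : ρ = p ∨ A ρ p ≠ 0 := hρ ▸ hr p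
  have hrq : ρ = q ∨ A ρ q ≠ 0 := by rw [hpq]; exact hr q
  rcases diag_eq_zero_or_one h01 (h3.mono (by norm_num)) ρ with hρ0 | hρ1
  · have hrow : ∀ x, A ρ x = 0 := fun x => by
      by_contra h
      simpa [hρ0] using diag_eq_one_of_apply_ne_zero h01 hA (h3.mono (by norm_num)) h
    obtain rfl := hrp.resolve_right (not_not.mpr (hrow p))
    obtain rfl := hrq.resolve_right (not_not.mpr (hrow q))
    rw [hρ0, mul_zero, zero_mul]
  · have hρp : A ρ p ≠ 0 := hrp.elim (fun h => by rw [← h, hρ1]; exact one_ne_zero) id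
    have hρq : A ρ q ≠ 0 := hrq.elim (fun h => by rw [← h, hρ1]; exact one_ne_zero) id
    have hp : repPhase A r p = star (A ρ p) := by rw [repPhase, hρ]; exact if_neg hρp
    have hq : repPhase A r q = star (A ρ q) := by rw [repPhase, ← hpq]; exact if_neg hρq
    have hpq_eq : A p q = star (A ρ p) * A ρ q := by
      rw [hA.apply p ρ, apply_mul_apply_eq h01 hA h3 (hA.apply_ne_zero hρp) hρq]
    rw [hp, hq, hpq_eq, hρ1, ← mul_assoc, inv_mul_cancel₀ (star_ne_zero.mpr hρp), one_mul,
      apply_mul_star_eq_one h01 hρq]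

end UnimodularEntries

/-- If `A` is Hermitian, `3`-PMP, with all entries of modulus `0` or `1`, then there
exist a diagonal matrix `D` with unimodular diagonal entries and a permutation matrix
`Q = σ.permMatrix ℂ` such that `(Q * D)⁻¹ * A * (Q * D)` is block-diagonal, with each
diagonal block an all-ones or an all-zeros square matrix. -/
theorem stmt1 {N : ℕ} (A : Matrix (Fin N) (Fin N) ℂ) (hA : A.IsHermitian)
    (h01 : ∀ i j, ‖A i j‖ = 0 ∨ ‖A i j‖ = 1)
    (h3 : kPMP 3 A) :
    ∃ (D : Matrix (Fin N) (Fin N) ℂ) (σ : Equiv.Perm (Fin N)),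
      D.IsDiag ∧ (∀ i, ‖D i i‖ = 1) ∧
      ∃ (m : ℕ) (c : Fin N → Fin m) (ε : Fin m → ℂ),
        Monotone c ∧ (∀ b, ε b = 0 ∨ ε b = 1) ∧
        ∀ i j, ((σ.permMatrix ℂ * D)⁻¹ * A * (σ.permMatrix ℂ * D)) i j
          = if c i = c j then ε (c i) else 0 := by
  let s : Setoid (Fin N) := ⟨_, equivalence_eq_or_apply_ne_zero h01 hA h3⟩
  let r : Fin N → Fin N := fun i => (Quotient.mk s i).out
  have hr : ∀ i, r i = i ∨ A (r i) i ≠ 0 := Quotient.mk_out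
  have hr_eq : ∀ i j, A i j ≠ 0 → r i = r j := fun i j h =>
    congrArg Quotient.out (Quotient.sound (.inr h))
  let τ := Tuple.sort r
  have hphase := norm_repPhase h01 r
  refine ⟨diagonal (repPhase A r ∘ τ), τ⁻¹, isDiag_diagonal _, fun i => by simp [hphase],
    N, r ∘ τ, fun b => A b b, Tuple.monotone_sort r,
    diag_eq_zero_or_one h01 (h3.mono (by norm_num)), fun i j => ?_⟩
  rw [conj_permMatrix_mul_diagonal_apply _ _ fun i => norm_ne_zero_iff.mp (by simp [hphase])]
  exact repPhase_inv_mul_apply_mul_repPhase h01 hA h3 hr hr_eq (τ i) (τ j)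
end

section
/- Let 0 ≤ k < N and let A be an N×N Hermitian matrix that is k-PMP but not (k+1)-PMP. Then A has at least k positive eigenvalues and at least one negative eigenvalue. -/
/-!
Since `A` is `k`-PMP but not `(k+1)`-PMP, some principal submatrix `B = A[S]` with `|S| = k + 1`
has `det B < 0`, while all principal minors of `B` of size at most `k` are nonnegative.

A Hermitian matrix `M` whose principal minors are all nonnegative is positive semidefinite:
`det (1 + t • M) = ∑ₛ t ^ |s| * det M[s] ≥ 1` for `t ≥ 0`, whereas it vanishes at `t = -1/λ` for
a negative eigenvalue `λ`. So every `k × k` principal submatrix of `B` is positive semidefinite,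
and by the min-max principle `B` has at least `k` nonnegative eigenvalues, which are positive as
`det B ≠ 0`. By Cauchy interlacing `A` has at least as many positive eigenvalues as `B`. Finally
`A` is not positive semidefinite, since otherwise neither would `B` be.
-/

open Matrix Finset Polynomial
open scoped ComplexOrder

namespace Matrix

variable {m n : Type*} [Fintype m]

theorem exists_ne_zero_forall_mulVec_apply_eq_zero {K : Type*} [Field K] (W : Matrix n m K)
    (s : Finset n) (hs : #s < Fintype.card m) : ∃ x ≠ 0, ∀ i ∈ s, (W *ᵥ x) i = 0 := by
  have hker := LinearMap.ker_ne_bot_of_finrank_lt (f := (W.submatrix ((↑) : s → n) id).mulVecLin)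
    (by simpa using hs)
  obtain ⟨x, hx, hx0⟩ := (Submodule.ne_bot_iff _).mp hker
  exact ⟨x, hx0, fun i hi => congrFun (LinearMap.mem_ker.mp hx) ⟨i, hi⟩⟩

variable [Fintype n]

theorem dotProduct_conjTranspose_mul_mul_mulVec {R : Type*} [CommSemiring R] [StarRing R]
    (A : Matrix n n R) (V : Matrix n m R) (x : m → R) :
    star x ⬝ᵥ ((Vᴴ * A * V) *ᵥ x) = star (V *ᵥ x) ⬝ᵥ (A *ᵥ (V *ᵥ x)) := by
  simp only [star_mulVec, dotProduct_mulVec, vecMul_vecMul]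

variable [DecidableEq n]

theorem conjTranspose_submatrix_one_mul_mul {l R : Type*} [Semiring R] [StarRing R]
    (A : Matrix n n R) (e : l → n) :
    ((1 : Matrix n n R).submatrix id e)ᴴ * A * (1 : Matrix n n R).submatrix id e =
      A.submatrix e e := by
  ext i j
  simp [mul_apply, one_apply]

theorem one_le_det_one_add_smul {R : Type*} [CommRing R] [PartialOrder R] [IsOrderedRing R]
    (M : Matrix n n R) (hM : ∀ s : Finset n, 0 ≤ (M.submatrix ((↑) : s → n) (↑)).det)
    {t : R} (ht : 0 ≤ t) : 1 ≤ (1 + t • M).det := by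
  set p : R[X] := det (1 + (X : R[X]) • M.map C)
  have heval : (1 + t • M).det = p.eval t := by
    rw [← coe_evalRingHom, RingHom.map_det]
    congr 1
    ext i j
    simp [one_apply, apply_ite, mul_comm t]
  have hcoeff : ∀ k, 0 ≤ p.coeff k := fun k => by
    rw [coeff_det_one_add_X_smul_eq_sum_minors]
    exact sum_nonneg fun s _ => hM s
  have hcoeff_zero : p.coeff 0 = 1 := by
    simp [p, coeff_det_one_add_X_smul_eq_sum_minors]
  rw [heval, eval_eq_sum_range]
  calc (1 : R) = p.coeff 0 * t ^ 0 := by simp [hcoeff_zero]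
    _ ≤ _ := single_le_sum (fun k _ => mul_nonneg (hcoeff k) (pow_nonneg ht k))
        (mem_range.mpr (Nat.succ_pos _))

namespace IsHermitian

variable {A : Matrix n n ℂ} (hA : A.IsHermitian)
include hA

theorem star_eigenvectorUnitary_mul_mul :
    star (hA.eigenvectorUnitary : Matrix n n ℂ) * A * hA.eigenvectorUnitary =
      diagonal (Complex.ofReal ∘ hA.eigenvalues) := by
  simpa using hA.conjStarAlgAut_star_eigenvectorUnitary

theorem det_one_add_smul (t : ℂ) : (1 + t • A).det = ∏ i, (1 + t * hA.eigenvalues i) := by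
  set U : Matrix n n ℂ := (hA.eigenvectorUnitary : Matrix n n ℂ)
  have hUU : star U * U = 1 := Unitary.coe_star_mul_self _
  have hconj : star U * (1 + t • A) * U = diagonal (fun i => 1 + t * hA.eigenvalues i) := by
    rw [Matrix.mul_add, Matrix.add_mul, Matrix.mul_one, hUU, Matrix.mul_smul, Matrix.smul_mul,
      hA.star_eigenvectorUnitary_mul_mul]
    ext i j
    by_cases h : i = j <;> simp [h]
  have := congrArg det hconj
  rwa [det_mul, det_mul, mul_right_comm, ← det_mul, hUU, det_one, one_mul,
    det_diagonal] at this

theorem dotProduct_mulVec_eq_sum_eigenvalues (x : n → ℂ) :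
    star x ⬝ᵥ (A *ᵥ x) = ((∑ i, hA.eigenvalues i *
      Complex.normSq ((star (hA.eigenvectorUnitary : Matrix n n ℂ) *ᵥ x) i) : ℝ) : ℂ) := by
  set U : Matrix n n ℂ := (hA.eigenvectorUnitary : Matrix n n ℂ)
  set y := star U *ᵥ x
  have hx : x = U *ᵥ y := by
    rw [mulVec_mulVec, show U * star U = 1 from Unitary.coe_mul_star_self _, one_mulVec]
  rw [hx, star_mulVec, ← dotProduct_mulVec, mulVec_mulVec, mulVec_mulVec,
    ← star_eq_conjTranspose, hA.star_eigenvectorUnitary_mul_mul]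
  simp only [dotProduct, mulVec_diagonal, Complex.ofReal_sum, Complex.ofReal_mul,
    Complex.normSq_eq_conj_mul_self, Pi.star_apply, RCLike.star_def, Function.comp_apply]
  exact sum_congr rfl fun i _ => mul_left_comm _ _ _

theorem posSemidef_of_forall_det_submatrix_nonneg
    (h : ∀ s : Finset n, 0 ≤ (A.submatrix ((↑) : s → n) (↑)).det) : A.PosSemidef := by
  rw [hA.posSemidef_iff_eigenvalues_nonneg]
  intro i
  by_contra! hi
  have hdet := A.one_le_det_one_add_smul h
    (Complex.zero_le_real.mpr (neg_nonneg.mpr (inv_nonpos.mpr hi.le)))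
  rw [hA.det_one_add_smul, prod_eq_zero (mem_univ i) (by
    rw [Complex.ofReal_neg, Complex.ofReal_inv, neg_mul, inv_mul_cancel₀ (mod_cast hi.ne),
      add_neg_cancel])] at hdet
  exact absurd hdet (by norm_num)

theorem card_le_card_pos_eigenvalues (V : Matrix n m ℂ) (hV : (Vᴴ * A * V).PosDef) :
    Fintype.card m ≤ #{i | 0 < hA.eigenvalues i} := by
  by_contra! hcard
  obtain ⟨x, hx0, hx⟩ := exists_ne_zero_forall_mulVec_apply_eq_zero
    (star (hA.eigenvectorUnitary : Matrix n n ℂ) * V) _ hcard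
  have hpos := hV.dotProduct_mulVec_pos hx0
  rw [dotProduct_conjTranspose_mul_mul_mulVec, hA.dotProduct_mulVec_eq_sum_eigenvalues,
    mulVec_mulVec, Complex.zero_lt_real] at hpos
  refine hpos.not_ge (sum_nonpos fun i _ => ?_)
  by_cases hi : 0 < hA.eigenvalues i
  · simp [hx i (by simpa using hi)]
  · exact mul_nonpos_of_nonpos_of_nonneg (not_lt.mp hi) (Complex.normSq_nonneg _)

theorem card_le_card_nonneg_eigenvalues (V : Matrix n m ℂ) (hV : (Vᴴ * A * V).PosSemidef)
    (hVinj : Function.Injective V.mulVec) :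
    Fintype.card m ≤ #{i | 0 ≤ hA.eigenvalues i} := by
  by_contra! hcard
  obtain ⟨x, hx0, hx⟩ := exists_ne_zero_forall_mulVec_apply_eq_zero
    (star (hA.eigenvectorUnitary : Matrix n n ℂ) * V) _ hcard
  have hy0 : (star (hA.eigenvectorUnitary : Matrix n n ℂ) * V) *ᵥ x ≠ 0 := by
    intro h
    have hVx : V *ᵥ x = 0 := by
      simpa [mulVec_mulVec, ← Matrix.mul_assoc, Unitary.coe_mul_star_self] using
        congrArg ((hA.eigenvectorUnitary : Matrix n n ℂ) *ᵥ ·) h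
    exact hx0 (hVinj (hVx.trans (mulVec_zero V).symm))
  obtain ⟨j, hj⟩ := Function.ne_iff.mp hy0
  have hnonneg := hV.dotProduct_mulVec_nonneg x
  rw [dotProduct_conjTranspose_mul_mul_mulVec, hA.dotProduct_mulVec_eq_sum_eigenvalues,
    mulVec_mulVec, Complex.zero_le_real] at hnonneg
  have hj_neg : hA.eigenvalues j < 0 := not_le.mp fun h => hj (hx j (by simpa using h))
  refine hnonneg.not_gt (sum_neg' (fun i _ => ?_) ⟨j, mem_univ _, ?_⟩)
  · by_cases hi : 0 ≤ hA.eigenvalues i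
    · simp [hx i (by simpa using hi)]
    · exact mul_nonpos_of_nonpos_of_nonneg (not_le.mp hi).le (Complex.normSq_nonneg _)
  · exact mul_neg_of_neg_of_pos hj_neg (Complex.normSq_pos.mpr hj)

theorem card_pos_eigenvalues_submatrix_le [DecidableEq m] (e : m → n) :
    #{i | 0 < (hA.submatrix e).eigenvalues i} ≤ #{i | 0 < hA.eigenvalues i} := by
  set hB := hA.submatrix e
  set s : Finset m := {i | 0 < hB.eigenvalues i}
  set P : Matrix n m ℂ := (1 : Matrix n n ℂ).submatrix id e
  set W : Matrix m s ℂ := (hB.eigenvectorUnitary : Matrix m m ℂ).submatrix id (↑)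
  have hV : (P * W)ᴴ * A * (P * W) = diagonal fun i : s => (hB.eigenvalues i : ℂ) := by
    calc (P * W)ᴴ * A * (P * W) = Wᴴ * (Pᴴ * A * P) * W := by
          simp only [conjTranspose_mul, Matrix.mul_assoc]
      _ = (star (hB.eigenvectorUnitary : Matrix m m ℂ) * A.submatrix e e *
            hB.eigenvectorUnitary).submatrix (↑) (↑) := by
          rw [conjTranspose_submatrix_one_mul_mul, submatrix_mul _ _ _ id _ Function.bijective_id,
            submatrix_mul _ _ _ id _ Function.bijective_id, conjTranspose_submatrix]
          rfl
      _ = _ := by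
          rw [hB.star_eigenvectorUnitary_mul_mul,
            submatrix_diagonal _ _ Subtype.val_injective]
          rfl
  calc #s = Fintype.card s := (Fintype.card_coe s).symm
    _ ≤ _ := hA.card_le_card_pos_eigenvalues (P * W) <| hV ▸ posDef_diagonal_iff.mpr fun i =>
          Complex.zero_lt_real.mpr (mem_filter.mp i.2).2

theorem card_le_card_pos_eigenvalues_of_posSemidef_submatrix [DecidableEq m] (hdet : A.det ≠ 0)
    {e : m → n} (he : Function.Injective e) (h : (A.submatrix e e).PosSemidef) :
    Fintype.card m ≤ #{i | 0 < hA.eigenvalues i} := by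
  set P : Matrix n m ℂ := (1 : Matrix n n ℂ).submatrix id e
  have hPP : Pᴴ * P = 1 := by
    have := conjTranspose_submatrix_one_mul_mul (1 : Matrix n n ℂ) e
    rwa [Matrix.mul_one, submatrix_one e he] at this
  have hPinj : Function.Injective P.mulVec := fun x y hxy => by
    simpa [mulVec_mulVec, hPP] using congrArg (Pᴴ *ᵥ ·) hxy
  have hμ : ∀ i, hA.eigenvalues i ≠ 0 := fun i => by
    have := prod_ne_zero_iff.mp (hA.det_eq_prod_eigenvalues ▸ hdet) i (mem_univ i)
    exact Complex.ofReal_ne_zero.mp this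
  calc Fintype.card m ≤ #{i | 0 ≤ hA.eigenvalues i} :=
        hA.card_le_card_nonneg_eigenvalues P (by rwa [conjTranspose_submatrix_one_mul_mul]) hPinj
    _ = #{i | 0 < hA.eigenvalues i} := by
        congr 1
        exact filter_congr fun i _ => (hμ i).symm.le_iff_lt

end IsHermitian

end Matrix

namespace kPMP

variable {N k : ℕ} {A : Matrix (Fin N) (Fin N) ℂ} {m : Type*} [Fintype m] [DecidableEq m]

theorem det_submatrix_nonneg_s9 (h : kPMP k A) {e : m → Fin N} (he : Function.Injective e)
    (hm : Fintype.card m ≤ k) : 0 ≤ (A.submatrix e e).det := by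
  set T := univ.map ⟨e, he⟩
  let σ : m ≃ T := Equiv.ofBijective (fun j => ⟨e j, mem_map_of_mem _ (mem_univ j)⟩)
    ⟨fun a b hab => he (congrArg Subtype.val hab), fun ⟨x, hx⟩ => by
      obtain ⟨j, -, rfl⟩ := mem_map.mp hx
      exact ⟨j, rfl⟩⟩
  have := h T (by simpa [T] using hm)
  rwa [← det_submatrix_equiv_self σ] at this

theorem posSemidef_submatrix (h : kPMP k A) (hA : A.IsHermitian) {e : m → Fin N}
    (he : Function.Injective e) (hm : Fintype.card m ≤ k) : (A.submatrix e e).PosSemidef :=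
  (hA.submatrix e).posSemidef_of_forall_det_submatrix_nonneg fun s => by
    rw [submatrix_submatrix]
    exact h.det_submatrix_nonneg_s9 (he.comp Subtype.val_injective)
      ((Fintype.card_coe s).trans_le (s.card_le_univ.trans hm))

end kPMP

theorem stmt9_general {N k : ℕ} (A : Matrix (Fin N) (Fin N) ℂ)
    (hA : A.IsHermitian) (h1 : kPMP k A) (h2 : ¬ kPMP (k + 1) A) :
    k ≤ (Finset.univ.filter fun i => 0 < hA.eigenvalues i).card ∧
      ∃ i, hA.eigenvalues i < 0 := by
  obtain ⟨S, hSk, hdet⟩ : ∃ S : Finset (Fin N), #S ≤ k + 1 ∧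
      ¬ 0 ≤ (A.submatrix (fun i : S => (i : Fin N)) (fun i : S => (i : Fin N))).det := by
    simpa [kPMP] using h2
  have hS : #S = k + 1 := by
    by_contra
    exact hdet (h1 S (by omega))
  obtain ⟨p, hp⟩ : S.Nonempty := card_pos.mp (by omega)
  have hcard : Fintype.card {x : S // x ≠ ⟨p, hp⟩} = k := by
    simp [Fintype.card_subtype_compl, hS]
  have hpsd : ((A.submatrix (fun i : S => (i : Fin N)) (fun i : S => (i : Fin N))).submatrix
      ((↑) : {x : S // x ≠ ⟨p, hp⟩} → S) (↑)).PosSemidef := by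
    rw [submatrix_submatrix]
    exact h1.posSemidef_submatrix hA (Subtype.val_injective.comp Subtype.val_injective) hcard.le
  refine ⟨?_, ?_⟩
  · calc k = Fintype.card {x : S // x ≠ ⟨p, hp⟩} := hcard.symm
      _ ≤ _ := (hA.submatrix _).card_le_card_pos_eigenvalues_of_posSemidef_submatrix
          (ne_of_not_le hdet).symm Subtype.val_injective hpsd
      _ ≤ _ := hA.card_pos_eigenvalues_submatrix_le _
  · by_contra! h
    exact hdet ((hA.posSemidef_iff_eigenvalues_nonneg.mpr h).submatrix _).det_nonneg

/-- If an `N × N` Hermitian matrix is `k`-PMP but not `(k+1)`-PMP (`0 ≤ k < N`),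
then it has at least `k` positive eigenvalues and at least one negative
eigenvalue. -/
theorem stmt9 {N k : ℕ} (hkN : k < N) (A : Matrix (Fin N) (Fin N) ℂ)
    (hA : A.IsHermitian) (h1 : kPMP k A) (h2 : ¬ kPMP (k + 1) A) :
    k ≤ (Finset.univ.filter fun i => 0 < hA.eigenvalues i).card ∧
      ∃ i, hA.eigenvalues i < 0 :=
  stmt9_general A hA h1 h2
end

section
/- Let G ⊆ ℂ× be a multiplicative subgroup. If π₁ and π₂ are two partitions of {1,...,N} such that for every pair of blocks the corresponding submatrix of a Hermitian matrix A has all entries in a single G-orbit, then the meet π₁ ∧ π₂ (the coarsening whose blocks are connected components of the union relation) also has this property. -/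
open Matrix

/-- `a` and `b` lie in the same orbit of the multiplicative subgroup `G ⊆ ℂˣ`. -/
def SameGOrbit (G : Subgroup ℂˣ) (a b : ℂ) : Prop := ∃ g ∈ G, a = (g : ℂˣ) * b

lemma SameGOrbit.refl (G : Subgroup ℂˣ) (a : ℂ) : SameGOrbit G a a :=
  ⟨1, G.one_mem, by simp⟩

lemma SameGOrbit.symm' {G : Subgroup ℂˣ} {a b : ℂ} (h : SameGOrbit G a b) :
    SameGOrbit G b a := by
  obtain ⟨g, hg, rfl⟩ := h
  exact ⟨g⁻¹, G.inv_mem hg, by simp [mul_assoc]⟩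

lemma SameGOrbit.trans' {G : Subgroup ℂˣ} {a b c : ℂ}
    (h : SameGOrbit G a b) (h' : SameGOrbit G b c) : SameGOrbit G a c := by
  obtain ⟨g, hg, rfl⟩ := h
  obtain ⟨g', hg', rfl⟩ := h'
  exact ⟨g * g', G.mul_mem hg hg', by push_cast; ring⟩

/-- A partition of the index set (encoded as a setoid) has the orbit property for
`A` if, for every pair of blocks `I, J`, all entries of the submatrix `A_{I×J}`
lie in a single `G`-orbit. -/
def OrbitPartition {N : ℕ} (G : Subgroup ℂˣ) (A : Matrix (Fin N) (Fin N) ℂ)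
    (s : Setoid (Fin N)) : Prop :=
  ∀ i i' j j' : Fin N, s.r i i' → s.r j j' → SameGOrbit G (A i j) (A i' j')

/-- If two partitions of `{1, …, N}` both have the `G`-orbit property for a
Hermitian matrix `A`, then so does their common coarsening (the join of the two
setoids, whose blocks are the connected components of the union relation). -/
theorem stmt14 {N : ℕ} (G : Subgroup ℂˣ) (A : Matrix (Fin N) (Fin N) ℂ)
    (hA : A.IsHermitian) (s₁ s₂ : Setoid (Fin N))
    (h₁ : OrbitPartition G A s₁) (h₂ : OrbitPartition G A s₂) :
    OrbitPartition G A (s₁ ⊔ s₂) := by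
  have hsup : (s₁ ⊔ s₂) = Relation.EqvGen.setoid (fun x y => s₁.r x y ∨ s₂.r x y) :=
    Setoid.sup_eq_eqvGen s₁ s₂
  have key : ∀ i i' : Fin N, (s₁ ⊔ s₂).r i i' →
      ∀ j : Fin N, SameGOrbit G (A i j) (A i' j) := by
    intro i i' h
    rw [hsup] at h
    induction h with
    | rel x y hxy =>
        intro j
        rcases hxy with h | h
        · exact h₁ x y j j h (s₁.refl j)
        · exact h₂ x y j j h (s₂.refl j)
    | refl x => exact fun j => SameGOrbit.refl G _
    | symm x y _ ih => exact fun j => (ih j).symm'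
    | trans x y z _ _ ih₁ ih₂ => exact fun j => (ih₁ j).trans' (ih₂ j)
  have key2 : ∀ j j' : Fin N, (s₁ ⊔ s₂).r j j' →
      ∀ i : Fin N, SameGOrbit G (A i j) (A i j') := by
    intro j j' h
    rw [hsup] at h
    induction h with
    | rel x y hxy =>
        intro i
        rcases hxy with h | h
        · exact h₁ i i x y (s₁.refl i) h
        · exact h₂ i i x y (s₂.refl i) h
    | refl x => exact fun i => SameGOrbit.refl G _
    | symm x y _ ih => exact fun i => (ih i).symm'
    | trans x y z _ _ ih₁ ih₂ => exact fun i => (ih₁ i).trans' (ih₂ i)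
  intro i i' j j' hi hj
  exact (key i i' hi j).trans' (key2 j j' hj i')
end
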